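/- For i.i.d. uniformly random strict student preferences in the common-priority model, every student's probability of being matched to her first-choice college under the TCDM with straightforward strategies and round limit T is at least her probability of being matched to her first choice under deferred acceptance. -/

import Mathlib

/-!
A stable matching always exists: serial dictatorship in priority order is stable.  Fix a
stable matching `μ`.  Along any run of the TCDM every student applies to an option she weakly
prefers to her `μ`-partner: a rejected student still meets the cutoff of her `μ`-partner `d`,
since if `d` is full it holds someone who is not `μ`-matched to `d` and who, by stability, has
lower priority.  So if `μ` gives `i` her first choice `c`, she applies to `c` in every round,
and she is held there because every higher-priority applicant to `c` is `μ`-matched to `c`.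
The inequality therefore holds profile by profile.
-/

open Finset
open scoped Classical

/-- A common-priority college admissions market: `n` students (index `0` is the
highest priority / highest score), `m` colleges with capacities `q`, and for each
student an injective ranking of the options in `Option (Fin m)` (`none` = being
unassigned / matched to oneself); a lower rank means more preferred. -/
structure Market (n m : ℕ) where
  q : Fin m → ℕ
  rank : Fin n → Option (Fin m) → ℕ
  rank_inj : ∀ i, Function.Injective (rank i)

namespace Market

variable {n m : ℕ}

/-- `i` strictly prefers option `a` to option `b`. -/
def Prefers (M : Market n m) (i : Fin n) (a b : Option (Fin m)) : Prop :=
  M.rank i a < M.rank i b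

/-- A matching: each student gets a college or `none`, capacities respected. -/
def IsMatching (M : Market n m) (μ : Fin n → Option (Fin m)) : Prop :=
  ∀ c : Fin m, (univ.filter fun i => μ i = some c).card ≤ M.q c

/-- Individual rationality. -/
def IR (M : Market n m) (μ : Fin n → Option (Fin m)) : Prop :=
  ∀ i c, μ i = some c → M.Prefers i (some c) none

/-- `(i, c)` blocks `μ`: `i` prefers `c` to her assignment and `c` has a free
seat or holds a student of strictly lower priority. -/
def Blocks (M : Market n m) (μ : Fin n → Option (Fin m)) (i : Fin n) (c : Fin m) : Prop :=
  M.Prefers i (some c) (μ i) ∧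
    ((univ.filter fun j => μ j = some c).card < M.q c ∨ ∃ j, μ j = some c ∧ i < j)

/-- Stability: a matching, individually rational, with no blocking pair. -/
def Stable (M : Market n m) (μ : Fin n → Option (Fin m)) : Prop :=
  M.IsMatching μ ∧ M.IR μ ∧ ∀ i c, ¬ M.Blocks μ i c

/-- Given an application profile, student `i` is tentatively held: she applies to
some college `c` and fewer than `q c` higher-priority students apply to `c`. -/
def Held (M : Market n m) (app : Fin n → Option (Fin m)) (i : Fin n) : Prop :=
  ∃ c, app i = some c ∧ (univ.filter fun j => app j = some c ∧ j < i).card < M.q c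

/-- The tentative matching induced by an application profile. -/
noncomputable def tentative (M : Market n m) (app : Fin n → Option (Fin m)) (i : Fin n) :
    Option (Fin m) :=
  if M.Held app i then app i else none

/-- `i` meets the current cutoff of `c`: `c` has a free seat in the tentative
matching, or tentatively holds a student of lower priority than `i`. -/
def Feasible (M : Market n m) (app : Fin n → Option (Fin m)) (i : Fin n) (c : Fin m) : Prop :=
  (univ.filter fun j => M.tentative app j = some c).card < M.q c ∨
    ∃ j, M.tentative app j = some c ∧ i < j

/-- The option `o` is available to `i`: `none` always is, a college iff `i`
meets its cutoff. -/
def FeasibleOpt (M : Market n m) (app : Fin n → Option (Fin m)) (i : Fin n)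
    (o : Option (Fin m)) : Prop :=
  o = none ∨ ∃ c, o = some c ∧ M.Feasible app i c

/-- One round of simultaneous straightforward revision: students who are not
rejected keep their application; every rejected student applies to her most
preferred option among those whose cutoff she meets. -/
def Step (M : Market n m) (app app' : Fin n → Option (Fin m)) : Prop :=
  ∀ i,
    (M.tentative app i = app i → app' i = app i) ∧
    (M.tentative app i ≠ app i →
      M.FeasibleOpt app i (app' i) ∧
        ∀ o, M.FeasibleOpt app i o → M.rank i (app' i) ≤ M.rank i o)

/-- A run of the TCDM under straightforward strategies: `app t` is the profile of
applications in round `t + 1`; in round one every student applies to her most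
preferred option, and each later round is a straightforward revision.  The
outcome of the TCDM with round limit `T ≥ 1` is `M.tentative (app (T - 1))`. -/
def IsRun (M : Market n m) (app : ℕ → Fin n → Option (Fin m)) : Prop :=
  (∀ i o, M.rank i (app 0 i) ≤ M.rank i o) ∧ ∀ t, M.Step (app t) (app (t + 1))

/-- Admission cutoff of college `c` (student `i` has score `n - i`): the lowest
score among tentatively held students if `c` is at capacity, `0` otherwise. -/
noncomputable def cutoff (M : Market n m) (app : Fin n → Option (Fin m)) (c : Fin m) : ℕ :=
  if h : M.q c ≤ (univ.filter fun j => M.tentative app j = some c).card ∧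
      (univ.filter fun j => M.tentative app j = some c).Nonempty then
    n - ((univ.filter fun j => M.tentative app j = some c).max' h.2 : ℕ)
  else 0

/-- Serial dictatorship outcome: in priority order each student receives her most
preferred option among `none` and the colleges not yet filled by
higher-priority students. -/
def IsSerialDictatorship (M : Market n m) (μ : Fin n → Option (Fin m)) : Prop :=
  ∀ i,
    (μ i = none ∨ ∃ c, μ i = some c ∧
        (univ.filter fun j => j < i ∧ μ j = some c).card < M.q c) ∧
    ∀ o, (o = none ∨ ∃ c, o = some c ∧
        (univ.filter fun j => j < i ∧ μ j = some c).card < M.q c) →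
      M.rank i (μ i) ≤ M.rank i o

end Market

/-- The market induced by capacities `q` and a profile `P` of strict preferences
over colleges (every college acceptable, `none` ranked last), where the
preference order of student `i` ranks college `c` in position `P i c`. -/
noncomputable def mkMarket {n m : ℕ} (q : Fin m → ℕ) (P : Fin n → Equiv.Perm (Fin m)) :
    Market n m where
  q := q
  rank := fun i o => o.elim m fun c => (P i c : ℕ)
  rank_inj := by
    intro i a b h
    match a, b with
    | none, none => rfl
    | none, some c =>
      simp only [Option.elim] at h
      exact absurd h.symm (Nat.ne_of_lt (P i c).isLt)
    | some c, none =>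
      simp only [Option.elim] at h
      exact absurd h (Nat.ne_of_lt (P i c).isLt)
    | some c, some d =>
      simp only [Option.elim] at h
      exact congrArg some ((P i).injective (Fin.val_injective h))

namespace Market

variable {n m : ℕ} {M : Market n m}

lemma prefers_of_rank_le_of_ne {i : Fin n} {a b : Option (Fin m)}
    (h : M.rank i a ≤ M.rank i b) (hne : a ≠ b) : M.Prefers i a b :=
  h.lt_of_ne fun he => hne (M.rank_inj i he)

lemma eq_some_of_rank_le_top {i : Fin n} {c : Fin m} {o : Option (Fin m)}
    (hIR : M.Prefers i (some c) none) (htop : ∀ c', M.rank i (some c) ≤ M.rank i (some c'))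
    (h : M.rank i o ≤ M.rank i (some c)) : o = some c := by
  cases o with
  | none => exact absurd h (not_le.2 hIR)
  | some c' => exact M.rank_inj i (le_antisymm h (htop c'))

section SerialDictatorship

variable (M) in
def SDAvailable (μ : Fin n → Option (Fin m)) (i : Fin n) (o : Option (Fin m)) : Prop :=
  o = none ∨ ∃ c, o = some c ∧ (univ.filter fun j => j < i ∧ μ j = some c).card < M.q c

variable (M) in
def SDChooses (μ : Fin n → Option (Fin m)) (i : Fin n) : Prop :=
  M.SDAvailable μ i (μ i) ∧ ∀ o, M.SDAvailable μ i o → M.rank i (μ i) ≤ M.rank i o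

lemma isSerialDictatorship_iff {μ : Fin n → Option (Fin m)} :
    M.IsSerialDictatorship μ ↔ ∀ i, M.SDChooses μ i :=
  Iff.rfl

lemma sdAvailable_congr {μ ν : Fin n → Option (Fin m)} {i : Fin n} {o : Option (Fin m)}
    (h : ∀ j < i, μ j = ν j) : M.SDAvailable μ i o ↔ M.SDAvailable ν i o := by
  have hcount : ∀ c, (univ.filter fun j => j < i ∧ μ j = some c) =
      univ.filter fun j => j < i ∧ ν j = some c :=
    fun c => filter_congr fun j _ => and_congr_right fun hj => by rw [h j hj]
  simp only [SDAvailable, hcount]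

lemma sdChooses_congr {μ ν : Fin n → Option (Fin m)} {i : Fin n}
    (h : ∀ j ≤ i, μ j = ν j) : M.SDChooses μ i ↔ M.SDChooses ν i := by
  have hbelow : ∀ j < i, μ j = ν j := fun j hj => h j hj.le
  simp only [SDChooses, sdAvailable_congr hbelow, h i le_rfl]

lemma exists_sdAvailable_min (μ : Fin n → Option (Fin m)) (i : Fin n) :
    ∃ o, M.SDAvailable μ i o ∧ ∀ o', M.SDAvailable μ i o' → M.rank i o ≤ M.rank i o' := by
  obtain ⟨o, ho, hmin⟩ := (univ.filter (M.SDAvailable μ i)).exists_min_image (M.rank i)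
    ⟨none, mem_filter.2 ⟨mem_univ _, Or.inl rfl⟩⟩
  exact ⟨o, (mem_filter.1 ho).2, fun o' ho' => hmin o' (mem_filter.2 ⟨mem_univ _, ho'⟩)⟩

variable (M) in
theorem exists_isSerialDictatorship : ∃ μ, M.IsSerialDictatorship μ := by
  suffices ∀ k, ∃ μ, ∀ i : Fin n, i.val < k → M.SDChooses μ i by
    obtain ⟨μ, hμ⟩ := this n
    exact ⟨μ, isSerialDictatorship_iff.2 fun i => hμ i i.isLt⟩
  intro k
  induction k with
  | zero => exact ⟨fun _ => none, fun i hi => absurd hi (Nat.not_lt_zero _)⟩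
  | succ k ih =>
    obtain ⟨μ, hμ⟩ := ih
    by_cases hk : k < n
    · set i₀ : Fin n := ⟨k, hk⟩
      obtain ⟨o, ho, hmin⟩ := M.exists_sdAvailable_min μ i₀
      have hagree : ∀ j, j ≠ i₀ → Function.update μ i₀ o j = μ j :=
        fun j hj => Function.update_of_ne hj _ _
      refine ⟨Function.update μ i₀ o, fun i hi => ?_⟩
      rcases Nat.lt_succ_iff_lt_or_eq.1 hi with hi | hi
      · refine (sdChooses_congr fun j hj => hagree j ?_).2 (hμ i hi)
        exact fun he => absurd (he ▸ hj : i₀ ≤ i) (not_le.2 hi)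
      · obtain rfl : i = i₀ := Fin.ext hi
        have hbelow : ∀ j < i₀, Function.update μ i₀ o j = μ j := fun j hj => hagree j hj.ne
        simp only [SDChooses, sdAvailable_congr hbelow, Function.update_self]
        exact ⟨ho, hmin⟩
    · exact ⟨μ, fun i hi => hμ i (by omega)⟩

lemma IsSerialDictatorship.card_lt {μ : Fin n → Option (Fin m)}
    (hμ : M.IsSerialDictatorship μ) {i : Fin n} {c : Fin m} (hi : μ i = some c) :
    (univ.filter fun j => j < i ∧ μ j = some c).card < M.q c := by
  rcases (hμ i).1 with h | ⟨c', hc', hcard⟩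
  · exact absurd (hi ▸ h) (Option.some_ne_none c)
  · obtain rfl := Option.some_injective _ (hi ▸ hc')
    exact hcard

lemma card_filter_lt_mono {p : Fin n → Prop} [DecidablePred p] {i i' : Fin n} (h : i ≤ i') :
    (univ.filter fun j => j < i ∧ p j).card ≤ (univ.filter fun j => j < i' ∧ p j).card :=
  card_le_card (monotone_filter_right _ fun _ _ hj => ⟨hj.1.trans_le h, hj.2⟩)

theorem IsSerialDictatorship.stable {μ : Fin n → Option (Fin m)}
    (hμ : M.IsSerialDictatorship μ) : M.Stable μ := by
  refine ⟨fun c => ?_, fun i c hi => ?_, fun i c ⟨hpref, hseat⟩ => ?_⟩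
  · set S := univ.filter fun j => μ j = some c
    rcases S.eq_empty_or_nonempty with hS | hS
    · simp [hS]
    have hmax : μ (S.max' hS) = some c := (mem_filter.1 (S.max'_mem hS)).2
    have hsub : S ⊆ insert (S.max' hS) (univ.filter fun j => j < S.max' hS ∧ μ j = some c) := by
      intro j hj
      rcases (S.le_max' j hj).lt_or_eq with hlt | heq
      · exact mem_insert_of_mem (mem_filter.2 ⟨mem_univ _, hlt, (mem_filter.1 hj).2⟩)
      · exact heq ▸ mem_insert_self _ _
    calc S.card ≤ _ := card_le_card hsub
      _ ≤ _ + 1 := card_insert_le _ _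
      _ ≤ M.q c := hμ.card_lt hmax
  · have h := (hμ i).2 none (Or.inl rfl)
    rw [hi] at h
    exact prefers_of_rank_le_of_ne h (Option.some_ne_none c)
  · have hfree : (univ.filter fun j => j < i ∧ μ j = some c).card < M.q c := by
      rcases hseat with hfree | ⟨j, hj, hij⟩
      · exact (card_le_card (monotone_filter_right _ fun _ _ => And.right)).trans_lt hfree
      · exact (card_filter_lt_mono hij.le).trans_lt (hμ.card_lt hj)
    exact absurd ((hμ i).2 (some c) (Or.inr ⟨c, rfl, hfree⟩)) (not_le.2 hpref)

variable (M) in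
theorem exists_stable : ∃ μ, M.Stable μ :=
  (M.exists_isSerialDictatorship).imp fun _ => IsSerialDictatorship.stable

end SerialDictatorship

lemma tentative_eq_some_iff {app : Fin n → Option (Fin m)} {i : Fin n} {c : Fin m} :
    M.tentative app i = some c ↔ app i = some c ∧ M.Held app i := by
  unfold tentative
  split_ifs with h <;> simp [h]

lemma tentative_eq_of_held {app : Fin n → Option (Fin m)} {i : Fin n} (h : M.Held app i) :
    M.tentative app i = app i :=
  if_pos h

section Stable

variable {μ app : Fin n → Option (Fin m)}

lemma Stable.lt_of_prefers (hμ : M.Stable μ) {j k : Fin n} {c : Fin m} (hj : μ j = some c)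
    (hk : M.Prefers k (some c) (μ k)) : j < k := by
  by_contra hkj
  have hne : k ≠ j := by
    rintro rfl
    exact lt_irrefl _ (hj ▸ hk)
  exact hμ.2.2 k c ⟨hk, Or.inr ⟨j, hj, lt_of_le_of_ne (not_lt.1 hkj) hne⟩⟩

/-- If `d` is full, some student held at `d` is not `μ`-matched to `d` (as `μ` respects the
capacity of `d`), and stability of `μ` puts her priority below `j`'s. -/
lemma Stable.feasible (hμ : M.Stable μ) (happ : ∀ k, M.rank k (app k) ≤ M.rank k (μ k))
    {j : Fin n} {d : Fin m} (hj : μ j = some d) (hjd : M.tentative app j ≠ some d) :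
    M.Feasible app j d := by
  by_contra hnf
  rw [Feasible, not_or, not_lt, not_exists] at hnf
  obtain ⟨hfull, hbelow⟩ := hnf
  have hsub : insert j (univ.filter fun k => M.tentative app k = some d) ⊆
      univ.filter fun k => μ k = some d := by
    intro k hk
    rcases mem_insert.1 hk with rfl | hk
    · exact mem_filter.2 ⟨mem_univ _, hj⟩
    have htk := (mem_filter.1 hk).2
    refine mem_filter.2 ⟨mem_univ _, by_contra fun hne => hbelow k ⟨htk, ?_⟩⟩
    have happk := (tentative_eq_some_iff.1 htk).1
    exact hμ.lt_of_prefers hj (prefers_of_rank_le_of_ne (happk ▸ happ k) (Ne.symm hne))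
  have hj_notMem : j ∉ univ.filter fun k => M.tentative app k = some d :=
    fun h => hjd (mem_filter.1 h).2
  have hcard := card_le_card hsub
  rw [card_insert_of_notMem hj_notMem] at hcard
  have := hμ.1 d
  omega

lemma Stable.held (hμ : M.Stable μ) (happ : ∀ k, M.rank k (app k) ≤ M.rank k (μ k))
    {i : Fin n} {c : Fin m} (hi : app i = some c) (hμi : μ i = some c) : M.Held app i := by
  refine ⟨c, hi, ?_⟩
  have hsub : (univ.filter fun j => app j = some c ∧ j < i) ⊆
      (univ.filter fun j => μ j = some c).erase i := by
    intro j hj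
    obtain ⟨hjc, hji⟩ := (mem_filter.1 hj).2
    refine mem_erase.2 ⟨hji.ne, mem_filter.2 ⟨mem_univ _, by_contra fun hne => ?_⟩⟩
    have hpref := prefers_of_rank_le_of_ne (hjc ▸ happ j) (Ne.symm hne)
    exact lt_asymm hji (hμ.lt_of_prefers hμi hpref)
  calc _ ≤ _ := card_le_card hsub
    _ < _ := card_erase_lt_of_mem (mem_filter.2 ⟨mem_univ _, hμi⟩)
    _ ≤ M.q c := hμ.1 c

end Stable

section Run

variable {app : ℕ → Fin n → Option (Fin m)} {μ : Fin n → Option (Fin m)}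

theorem IsRun.rank_le_of_stable (hrun : M.IsRun app) (hμ : M.Stable μ) (t : ℕ) (j : Fin n) :
    M.rank j (app t j) ≤ M.rank j (μ j) := by
  induction t generalizing j with
  | zero => exact hrun.1 j (μ j)
  | succ t ih =>
    by_cases hkeep : M.tentative (app t) j = app t j
    · rw [(hrun.2 t j).1 hkeep]
      exact ih j
    refine ((hrun.2 t j).2 hkeep).2 (μ j) ?_
    cases hj : μ j with
    | none => exact Or.inl rfl
    | some d =>
      refine Or.inr ⟨d, rfl, hμ.feasible ih hj fun htd => hkeep ?_⟩
      rw [htd, (tentative_eq_some_iff.1 htd).1]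

theorem IsRun.tentative_eq_of_stable_top (hrun : M.IsRun app) (hμ : M.Stable μ) {i : Fin n}
    {c : Fin m} (hc : μ i = some c) (htop : ∀ c', M.rank i (some c) ≤ M.rank i (some c'))
    (t : ℕ) : M.tentative (app t) i = some c := by
  have happ := hrun.rank_le_of_stable hμ t
  have hi : app t i = some c := eq_some_of_rank_le_top (hμ.2.1 i c hc) htop (hc ▸ happ i)
  rw [tentative_eq_of_held (hμ.held happ hi hc), hi]

end Run

end Market

theorem tcdm_first_choice_prob_ge_DA_general (n m : ℕ) (q : Fin m → ℕ)
    (T : ℕ) (i : Fin n) :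
    ((Finset.univ : Finset (Fin n → Equiv.Perm (Fin m))).filter fun P =>
        ∀ μ : Fin n → Option (Fin m), (mkMarket q P).Stable μ →
          ∃ c : Fin m, μ i = some c ∧
            ∀ c' : Fin m,
              (mkMarket q P).rank i (some c) ≤ (mkMarket q P).rank i (some c')).card
      ≤
    ((Finset.univ : Finset (Fin n → Equiv.Perm (Fin m))).filter fun P =>
        ∀ app : ℕ → Fin n → Option (Fin m), (mkMarket q P).IsRun app →
          ∃ c : Fin m, (mkMarket q P).tentative (app (T - 1)) i = some c ∧
            ∀ c' : Fin m,
              (mkMarket q P).rank i (some c) ≤ (mkMarket q P).rank i (some c')).card := by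
  refine card_le_card fun P hP => ?_
  simp only [mem_filter, mem_univ, true_and] at hP ⊢
  intro app hrun
  obtain ⟨μ, hμ⟩ := (mkMarket q P).exists_stable
  obtain ⟨c, hc, htop⟩ := hP μ hμ
  exact ⟨c, hrun.tentative_eq_of_stable_top hμ hc htop (T - 1), htop⟩

/-- with i.i.d. uniformly random strict preferences (a uniformly
random strict order of the colleges for every student, all acceptable), every
student's probability of receiving her first-choice college under the TCDM with
straightforward strategies and round limit `T ≥ 1` is at least her probability
of receiving her first choice under deferred acceptance (the unique stable
matching).  Probabilities are compared by counting preference profiles. -/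
theorem tcdm_first_choice_prob_ge_DA (n m : ℕ) (q : Fin m → ℕ)
    (T : ℕ) (hT : 1 ≤ T) (i : Fin n) :
    ((Finset.univ : Finset (Fin n → Equiv.Perm (Fin m))).filter fun P =>
        ∀ μ : Fin n → Option (Fin m), (mkMarket q P).Stable μ →
          ∃ c : Fin m, μ i = some c ∧
            ∀ c' : Fin m,
              (mkMarket q P).rank i (some c) ≤ (mkMarket q P).rank i (some c')).card
      ≤
    ((Finset.univ : Finset (Fin n → Equiv.Perm (Fin m))).filter fun P =>
        ∀ app : ℕ → Fin n → Option (Fin m), (mkMarket q P).IsRun app →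
          ∃ c : Fin m, (mkMarket q P).tentative (app (T - 1)) i = some c ∧
            ∀ c' : Fin m,
              (mkMarket q P).rank i (some c) ≤ (mkMarket q P).rank i (some c')).card :=
  tcdm_first_choice_prob_ge_DA_general n m q T i
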